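/- The growth and pruning operators satisfy the commutation relation P G - G P = n·I on ℂ𝒯_n for every n ≥ 1: for every rooted unlabeled tree t on n vertices, P(G(t)) - G(P(t)) = n·t. -/

import Mathlib

/-!
Common definitions: rooted unlabeled trees on `n` vertices, the growth/pruning
coefficients `n(t,t')` and `m(t,t')`, the measure `π_n`, the up/down transition
probabilities, the down-up and up-down Markov chains, and separation distance.

A rooted tree is represented as `PreTree.node cs` where `cs` is the list of
subtrees of the root's children.  An *unlabeled* rooted tree is represented by
its canonical representative (children recursively sorted by an injective
encoding into `ℕ`), and `trees n` is the finite set of canonical rooted trees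
on `n` vertices.
-/

namespace RootedTreeChain

inductive PreTree : Type where
  | node : List PreTree → PreTree

namespace PreTree

/- Number of vertices. -/
mutual
  def size : PreTree → ℕ
    | .node cs => 1 + sizeList cs
  def sizeList : List PreTree → ℕ
    | [] => 0
    | t :: ts => size t + sizeList ts
end

mutual
def deq : (a b : PreTree) → Decidable (a = b)
  | .node cs, .node ds =>
    match deqList cs ds with
    | isTrue h => isTrue (by rw [h])
    | isFalse h => isFalse (by intro hh; cases hh; exact h rfl)
def deqList : (as bs : List PreTree) → Decidable (as = bs)
  | [], [] => isTrue rfl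
  | [], _ :: _ => isFalse (by simp)
  | _ :: _, [] => isFalse (by simp)
  | a :: as, b :: bs =>
    match deq a b, deqList as bs with
    | isTrue h1, isTrue h2 => isTrue (by rw [h1, h2])
    | isFalse h1, _ => isFalse (by intro hh; injection hh; contradiction)
    | _, isFalse h2 => isFalse (by intro hh; injection hh; contradiction)
end

instance : DecidableEq PreTree := deq

/- An injective encoding of trees into `ℕ`, used only to sort children
so that each unlabeled rooted tree has a unique canonical representative. -/
mutual
  def enc : PreTree → ℕ
    | .node cs => encList cs
  def encList : List PreTree → ℕ
    | [] => 0
    | t :: ts => Nat.pair (enc t) (encList ts) + 1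
end

/- Canonical representative of the isomorphism class of a rooted tree:
recursively sort the children by their encoding. -/
mutual
  def canon : PreTree → PreTree
    | .node cs => .node ((canonList cs).mergeSort (fun a b => enc a ≤ enc b))
  def canonList : List PreTree → List PreTree
    | [] => []
    | t :: ts => canon t :: canonList ts
end

/-- The one-vertex rooted tree `•`. -/
def leaf : PreTree := .node []

/- The addresses (paths of child indices from the root) of all vertices. -/
mutual
  def positions : PreTree → List (List ℕ)
    | .node cs => [] :: positionsList 0 cs
  def positionsList : ℕ → List PreTree → List (List ℕ)
    | _, [] => []
    | i, t :: ts => (positions t).map (fun p => i :: p) ++ positionsList (i + 1) ts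
end

/- The addresses of all terminal vertices (vertices with no outgoing edge). -/
mutual
  def termPositions : PreTree → List (List ℕ)
    | .node [] => [[]]
    | .node (c :: cs) => termPositionsList 0 (c :: cs)
  def termPositionsList : ℕ → List PreTree → List (List ℕ)
    | _, [] => []
    | i, t :: ts => (termPositions t).map (fun p => i :: p) ++ termPositionsList (i + 1) ts
end

/- Attach a new terminal vertex by an edge to the vertex at address `p`. -/
mutual
  def addLeafAt : PreTree → List ℕ → PreTree
    | .node cs, [] => .node (cs ++ [leaf])
    | .node cs, i :: p => .node (addLeafAtList cs i p)
  def addLeafAtList : List PreTree → ℕ → List ℕ → List PreTree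
    | [], _, _ => []
    | t :: ts, 0, p => addLeafAt t p :: ts
    | t :: ts, i + 1, p => t :: addLeafAtList ts i p
end

/- Remove the (terminal) vertex at address `p` together with the edge into it. -/
mutual
  def removeAt : PreTree → List ℕ → PreTree
    | .node cs, [] => .node cs
    | .node cs, [i] => .node (cs.eraseIdx i)
    | .node cs, i :: p => .node (removeAtList cs i p)
  def removeAtList : List PreTree → ℕ → List ℕ → List PreTree
    | [], _, _ => []
    | t :: ts, 0, p => removeAt t p :: ts
    | t :: ts, i + 1, p => t :: removeAtList ts i p
end

/-- For `s ↗ t` (and more generally any `s, t` with `size t = size s + 1`),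
`ncoef s t` is `n(s,t)`: the number of vertices of `s` to which a new edge can
be added to obtain `t`. -/
def ncoef (s t : PreTree) : ℕ :=
  ((positions s).filter (fun p => canon (addLeafAt s p) = t)).length

/-- For `s ↗ t`, `mcoef s t` is `m(s,t)`: the number of edges of `t` (into a
terminal vertex) which when removed give `s`. -/
def mcoef (s t : PreTree) : ℕ :=
  ((termPositions t).filter (fun p => canon (removeAt t p) = s)).length

/-- The list of all (canonical representatives of) rooted unlabeled trees on
`n` vertices: every tree on `n+1 ≥ 2` vertices is obtained by attaching a new
terminal vertex to a tree on `n` vertices. -/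
def treeList : ℕ → List PreTree
  | 0 => []
  | 1 => [leaf]
  | n + 2 =>
      ((treeList (n + 1)).flatMap
        (fun t => (positions t).map (fun p => canon (addLeafAt t p)))).dedup

/-- The set `𝒯_n` of rooted unlabeled trees on `n` vertices. -/
def trees (n : ℕ) : Finset PreTree := (treeList n).toFinset

/-- `T_n = |𝒯_n|`, the number of rooted unlabeled trees on `n` vertices. -/
def T (n : ℕ) : ℕ := (trees n).card

/-- Generalized growth coefficients: `nGen k t t'` is the coefficient `n(t,t')`
of `t'` in `G^k(t)` (for `size t' = size t + k`). -/
def nGen : ℕ → PreTree → PreTree → ℕ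
  | 0, t, t' => if t = t' then 1 else 0
  | k + 1, t, t' => ((treeList (t.size + k)).map (fun s => nGen k t s * ncoef s t')).sum

/-- Generalized pruning coefficients: `mGen k t t'` is the coefficient `m(t,t')`
of `t` in `P^k(t')` (for `size t' = size t + k`). -/
def mGen : ℕ → PreTree → PreTree → ℕ
  | 0, t, t' => if t = t' then 1 else 0
  | k + 1, t, t' => ((treeList (t'.size - 1)).map (fun s => mcoef s t' * mGen k t s)).sum

/-- `m(t) = m(•,t)`, the number of ways to take `t` apart by sequentially
removing terminal edges. -/
def mWt (t : PreTree) : ℕ := mGen (t.size - 1) leaf t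

/-- `n(t) = n(•,t)`, the number of ways to build `t` up from `•`. -/
def nWt (t : PreTree) : ℕ := nGen (t.size - 1) leaf t

/-- The measure `π_n(t) = m(t) n(t) / ∏_{i=2}^n C(i,2)` on `𝒯_n`. -/
def piM (n : ℕ) (t : PreTree) : ℚ :=
  (mWt t * nWt t : ℚ) / ∏ i ∈ Finset.Icc 2 n, (Nat.choose i 2 : ℚ)

/-- Upward transition probability `P_u(s,t) = m(s,t) n(t) / (C(n,2) n(s))`
from `s ∈ 𝒯_{n-1}` to `t ∈ 𝒯_n`. -/
def Pu (n : ℕ) (s t : PreTree) : ℚ :=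
  (mcoef s t : ℚ) * (nWt t : ℚ) / ((Nat.choose n 2 : ℚ) * (nWt s : ℚ))

/-- Downward transition probability `P_d(t,s) = m(s,t) m(s) / m(t)`
from `t ∈ 𝒯_n` to `s ∈ 𝒯_{n-1}`. -/
def Pd (t s : PreTree) : ℚ :=
  (mcoef s t : ℚ) * (mWt s : ℚ) / (mWt t : ℚ)

/-- The down-up Markov chain on `𝒯_n`:
`K(t,t') = Σ_{s : s ↗ t, s ↗ t'} P_d(t,s) P_u(s,t')`.  (The sum may be taken
over all `s ∈ 𝒯_{n-1}` since the summand vanishes unless `s ↗ t` and `s ↗ t'`.) -/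
def K (n : ℕ) (t t' : PreTree) : ℚ :=
  ∑ s ∈ trees (n - 1), Pd t s * Pu n s t'

/-- `r`-step transition probabilities `K^r(t,t')` of the down-up chain. -/
def Kpow (n : ℕ) : ℕ → PreTree → PreTree → ℚ
  | 0, t, t' => if t = t' then 1 else 0
  | r + 1, t, t' => ∑ s ∈ trees n, K n t s * Kpow n r s t'

/-- The up-down Markov chain on `𝒯_n`:
`DU_n(t,t') = Σ_{s : s ⋗ t, s ⋗ t'} P_u(t,s) P_d(s,t')`. -/
def DU (n : ℕ) (t t' : PreTree) : ℚ :=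
  ∑ s ∈ trees (n + 1), Pu (n + 1) t s * Pd s t'

/-- `r`-step transition probabilities of the up-down chain. -/
def DUpow (n : ℕ) : ℕ → PreTree → PreTree → ℚ
  | 0, t, t' => if t = t' then 1 else 0
  | r + 1, t, t' => ∑ s ∈ trees n, DU n t s * DUpow n r s t'

/-- Maximal separation distance `s^*(r) = max_{t,t' ∈ 𝒯_n} [1 - K^r(t,t')/π_n(t')]`
of the down-up chain on `𝒯_n`. -/
noncomputable def sStar (n r : ℕ) : ℝ :=
  sSup {x : ℝ | ∃ t ∈ trees n, ∃ t' ∈ trees n,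
    x = 1 - (Kpow n r t t' : ℝ) / (piM n t' : ℝ)}

/-- Maximal separation distance of the up-down chain on `𝒯_n`. -/
noncomputable def sStarDU (n r : ℕ) : ℝ :=
  sSup {x : ℝ | ∃ t ∈ trees n, ∃ t' ∈ trees n,
    x = 1 - (DUpow n r t t' : ℝ) / (piM n t' : ℝ)}

/-- The path on `n` vertices (rooted at an end): the unique rooted tree on
`n ≥ 2` vertices with exactly one terminal vertex. -/
def pathTree : ℕ → PreTree
  | 0 => leaf
  | 1 => leaf
  | n + 2 => .node [pathTree (n + 1)]

/-- The star on `n` vertices (rooted at the center): the unique rooted tree on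
`n` vertices with `n-1` terminal vertices. -/
def starTree (n : ℕ) : PreTree := .node (List.replicate (n - 1) leaf)


/- The order of the symmetry group `SG(t) = ∏_{v ∈ t} SG(t,v)`, where for a
vertex `v` with children `v_1, …, v_k`, `SG(t,v)` is generated by the
permutations exchanging isomorphic subtrees rooted at the `v_i`. -/
mutual
  def sgOrder : PreTree → ℕ
    | .node cs => sgOrderList cs *
        ((canonList cs).dedup.map (fun c => Nat.factorial ((canonList cs).count c))).prod
  def sgOrderList : List PreTree → ℕ
    | [] => 1
    | t :: ts => sgOrder t * sgOrderList ts
end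

/- `hProd t = ∏_{v ∈ t} h(v)`, the product over all vertices `v` of `t` of the
number `h(v)` of vertices of the subtree rooted at `v`. -/
mutual
  def hProd : PreTree → ℕ
    | .node cs => size (.node cs) * hProdList cs
  def hProdList : List PreTree → ℕ
    | [] => 1
    | t :: ts => hProd t * hProdList ts
end

/-- The matrix entry of `G P : ℂ𝒯_n → ℂ𝒯_n`: the coefficient of `t'` in `G(P(t))`. -/
def gpEntry (n : ℕ) (t t' : PreTree) : ℕ :=
  ∑ s ∈ trees (n - 1), mcoef s t * ncoef s t'

/-- The matrix entry of `(G P)^l : ℂ𝒯_n → ℂ𝒯_n`: the coefficient of `t'` in `(GP)^l(t)`. -/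
def gpPow (n : ℕ) : ℕ → PreTree → PreTree → ℕ
  | 0, t, t' => if t = t' then 1 else 0
  | l + 1, t, t' => ∑ u ∈ trees n, gpPow n l t u * gpEntry n u t'

end PreTree

/-!
Write a canonical tree as `ofForest F`, a root over the multiset `F` of its subtrees. Growing
either adds a leaf at the root or grows one member of `F`; pruning deletes a member of `F` that is a
single vertex and otherwise prunes one member. In `P (G t)`, the pairs that grow and prune the same
member `c` contribute, by induction, `size c • t` plus the matching terms of `G (P t)`; pairs acting
on two different members commute; and the new root leaf is either pruned again, giving `t` once,
or survives, matching the growth at the root in `G (P t)`. Hence `P (G t) = size t • t + G (P t)`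
as multisets.
-/

end RootedTreeChain

namespace Multiset

variable {α β : Type*}

theorem bind_nsmul_const (s : Multiset α) (n : α → ℕ) (t : Multiset β) :
    (s.bind fun a => n a • t) = (s.map n).sum • t := by
  induction s using Multiset.induction <;> simp [add_nsmul, *]

theorem bind_bind_erase_comm [DecidableEq α] (s : Multiset α) (f : α → α → Multiset β) :
    (s.bind fun a => (s.erase a).bind (f a)) = s.bind fun a => (s.erase a).bind fun b => f b a := by
  induction s using Multiset.induction with
  | empty => simp
  | cons x s ih =>
    have hsplit (h : α → α → Multiset β) : ((x ::ₘ s).bind fun a => ((x ::ₘ s).erase a).bind (h a))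
        = s.bind (h x) + s.bind (fun a => h a x) + s.bind fun a => (s.erase a).bind (h a) := by
      rw [cons_bind, erase_cons_head, add_assoc]
      congr 1
      rw [← bind_add]
      exact bind_congr fun a ha => by rw [erase_cons_tail_of_mem ha, cons_bind]
    rw [hsplit, hsplit, ih]
    abel

theorem sum_count_mul_count_eq_count_bind [DecidableEq α] [DecidableEq β] {S : Finset α}
    {s : Multiset α} (hs : ∀ a ∈ s, a ∈ S) (f : α → Multiset β) (b : β) :
    ∑ a ∈ S, s.count a * (f a).count b = (s.bind f).count b := by
  rw [count_bind, Finset.sum_multiset_map_count]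
  refine (Finset.sum_subset (fun a ha => hs a (mem_toFinset.1 ha)) fun a _ ha => ?_).symm
  rw [count_eq_zero.2 (mt mem_toFinset.2 ha), zero_mul]

end Multiset

namespace RootedTreeChain

section Forest

-- `F` stands for the multiset of subtrees at a root, `g` and `p` for growing and pruning one
-- tree, and `ℓ` for the one-vertex tree.

variable {α : Type*} [DecidableEq α]

def growForest (g : α → Multiset α) (F : Multiset α) : Multiset (Multiset α) :=
  F.bind fun c => (g c).map (· ::ₘ F.erase c)

def pruneForest (p : α → Multiset α) (ℓ : α) (F : Multiset α) : Multiset (Multiset α) :=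
  F.bind fun c => (if c = ℓ then {F.erase c} else 0) + (p c).map (· ::ₘ F.erase c)

variable (g p : α → Multiset α) (ℓ : α)

theorem growForest_cons (x : α) (E : Multiset α) :
    growForest g (x ::ₘ E)
      = (g x).map (· ::ₘ E) + E.bind fun d => (g d).map (· ::ₘ x ::ₘ E.erase d) := by
  rw [growForest, Multiset.cons_bind, Multiset.erase_cons_head]
  congr 1
  exact Multiset.bind_congr fun d hd => by rw [Multiset.erase_cons_tail_of_mem hd]

theorem pruneForest_cons (x : α) (E : Multiset α) :
    pruneForest p ℓ (x ::ₘ E)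
      = (if x = ℓ then {E} else 0) + (p x).map (· ::ₘ E) + E.bind fun d =>
          (if d = ℓ then {x ::ₘ E.erase d} else 0) + (p d).map (· ::ₘ x ::ₘ E.erase d) := by
  rw [pruneForest, Multiset.cons_bind, Multiset.erase_cons_head]
  congr 1
  exact Multiset.bind_congr fun d hd => by rw [Multiset.erase_cons_tail_of_mem hd]

theorem pruneForest_cons_self (hℓ : p ℓ = 0) (F : Multiset α) :
    pruneForest p ℓ (ℓ ::ₘ F) = F ::ₘ (pruneForest p ℓ F).map (ℓ ::ₘ ·) := by
  rw [pruneForest_cons, if_pos rfl, hℓ, Multiset.map_zero, add_zero, ← Multiset.singleton_add,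
    pruneForest, Multiset.map_bind]
  refine congrArg _ (Multiset.bind_congr fun d _ => ?_)
  split_ifs <;> simp [Multiset.cons_swap]

variable {g p ℓ}

theorem forall_mem_of_mem_growForest {Q : α → Prop} {F F' : Multiset α}
    (hF : ∀ c ∈ F, Q c) (hg : ∀ c ∈ F, ∀ x ∈ g c, Q x) (h : F' ∈ growForest g F) :
    ∀ c ∈ F', Q c := by
  simp only [growForest, Multiset.mem_bind, Multiset.mem_map] at h
  obtain ⟨c, hc, x, hx, rfl⟩ := h
  simp only [Multiset.mem_cons]
  rintro d (rfl | hd)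
  exacts [hg c hc d hx, hF d (Multiset.mem_of_mem_erase hd)]

theorem forall_mem_of_mem_pruneForest {Q : α → Prop} {F F' : Multiset α}
    (hF : ∀ c ∈ F, Q c) (hp : ∀ c ∈ F, ∀ y ∈ p c, Q y) (h : F' ∈ pruneForest p ℓ F) :
    ∀ c ∈ F', Q c := by
  simp only [pruneForest, Multiset.mem_bind, Multiset.mem_add, Multiset.mem_map] at h
  obtain ⟨c, hc, h | ⟨y, hy, rfl⟩⟩ := h
  · split_ifs at h
    · rw [Multiset.mem_singleton.1 h]
      exact fun d hd => hF d (Multiset.mem_of_mem_erase hd)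
    · simp at h
  · simp only [Multiset.mem_cons]
    rintro d (rfl | hd)
    exacts [hp c hc d hy, hF d (Multiset.mem_of_mem_erase hd)]

theorem sum_map_of_mem_growForest {w : α → ℕ} {F F' : Multiset α}
    (hg : ∀ c ∈ F, ∀ x ∈ g c, w x = w c + 1) (h : F' ∈ growForest g F) :
    (F'.map w).sum = (F.map w).sum + 1 := by
  simp only [growForest, Multiset.mem_bind, Multiset.mem_map] at h
  obtain ⟨c, hc, x, hx, rfl⟩ := h
  rw [Multiset.map_cons, Multiset.sum_cons, hg c hc x hx, ← Multiset.sum_map_erase (f := w) hc]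
  ring

theorem sum_map_of_mem_pruneForest {w : α → ℕ} {F F' : Multiset α} (hℓ : w ℓ = 1)
    (hp : ∀ c ∈ F, ∀ y ∈ p c, w y + 1 = w c) (h : F' ∈ pruneForest p ℓ F) :
    (F'.map w).sum + 1 = (F.map w).sum := by
  simp only [pruneForest, Multiset.mem_bind, Multiset.mem_add, Multiset.mem_map] at h
  obtain ⟨c, hc, h | ⟨y, hy, rfl⟩⟩ := h
  · split_ifs at h with hcℓ
    · rw [Multiset.mem_singleton.1 h, ← Multiset.sum_map_erase (f := w) hc, hcℓ, hℓ, add_comm]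
    · simp at h
  · rw [Multiset.map_cons, Multiset.sum_cons, ← Multiset.sum_map_erase (f := w) hc, ← hp c hc y hy]
    ring

theorem pruneForest_ne_zero {F : Multiset α} (hF : F ≠ 0) (hp : ∀ c ∈ F, c ≠ ℓ → p c ≠ 0) :
    pruneForest p ℓ F ≠ 0 := by
  obtain ⟨c, hc⟩ := Multiset.exists_mem_of_ne_zero hF
  suffices ∃ F', F' ∈ pruneForest p ℓ F by
    obtain ⟨F', hF'⟩ := this
    exact fun h0 => Multiset.notMem_zero F' (h0 ▸ hF')
  by_cases hcℓ : c = ℓ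
  · exact ⟨F.erase c, Multiset.mem_bind.2 ⟨c, hc, by simp [hcℓ]⟩⟩
  · obtain ⟨y, hy⟩ := Multiset.exists_mem_of_ne_zero (hp c hc hcℓ)
    exact ⟨y ::ₘ F.erase c, Multiset.mem_bind.2 ⟨c, hc, by simp [hy]⟩⟩

theorem eq_cons_or_mem_growForest_of_mem_pruneForest {F F' : Multiset α}
    (hpg : ∀ c ∈ F, ∀ y ∈ p c, c ∈ g y) (h : F' ∈ pruneForest p ℓ F) :
    F = ℓ ::ₘ F' ∨ F ∈ growForest g F' := by
  simp only [pruneForest, Multiset.mem_bind, Multiset.mem_add, Multiset.mem_map] at h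
  obtain ⟨c, hc, h | ⟨y, hy, rfl⟩⟩ := h
  · split_ifs at h with hcℓ
    · rw [Multiset.mem_singleton.1 h, ← hcℓ, Multiset.cons_erase hc]
      exact Or.inl rfl
    · simp at h
  · refine Or.inr (Multiset.mem_bind.2 ⟨y, Multiset.mem_cons_self _ _,
      Multiset.mem_map.2 ⟨c, hpg c hc y hy, ?_⟩⟩)
    rw [Multiset.erase_cons_head, Multiset.cons_erase hc]

theorem growForest_bind_pruneForest_eq_add (F : Multiset α) (hℓ : ∀ c ∈ F, ℓ ∉ g c) :
    (growForest g F).bind (pruneForest p ℓ)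
      = (F.bind fun c => (g c).bind fun x => (p x).map (· ::ₘ F.erase c))
        + (F.bind fun c => (g c).bind fun x => (F.erase c).bind fun d =>
            if d = ℓ then {x ::ₘ (F.erase c).erase d} else 0)
        + (F.bind fun c => (g c).bind fun x => (F.erase c).bind fun d =>
            (p d).map (· ::ₘ x ::ₘ (F.erase c).erase d)) := by
  simp only [growForest, Multiset.bind_assoc, Multiset.bind_map, ← Multiset.bind_add]
  refine Multiset.bind_congr fun c hc => Multiset.bind_congr fun x hx => ?_
  rw [pruneForest_cons, if_neg (ne_of_mem_of_not_mem hx (hℓ c hc)), zero_add, Multiset.bind_add,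
    add_assoc]

theorem pruneForest_bind_growForest_eq_add (F : Multiset α) :
    (pruneForest p ℓ F).bind (growForest g)
      = (F.bind fun c => if c = ℓ then growForest g (F.erase c) else 0)
        + (F.bind fun c => (p c).bind fun y => (g y).map (· ::ₘ F.erase c))
        + (F.bind fun c => (p c).bind fun y => (F.erase c).bind fun d =>
            (g d).map (· ::ₘ y ::ₘ (F.erase c).erase d)) := by
  simp only [pruneForest, Multiset.bind_assoc, Multiset.add_bind, Multiset.bind_map,
    growForest_cons, Multiset.bind_add, add_assoc]
  congr 1
  exact Multiset.bind_congr fun c _ => by split_ifs <;> simp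

theorem growForest_bind_pruneForest (w : α → ℕ) (F : Multiset α) (hℓ : ∀ c ∈ F, ℓ ∉ g c)
    (h : ∀ c ∈ F, (g c).bind p = w c • {c} + (p c).bind g) :
    (growForest g F).bind (pruneForest p ℓ)
      = (F.map w).sum • {F} + (pruneForest p ℓ F).bind (growForest g) := by
  have hsame : (F.bind fun c => (g c).bind fun x => (p x).map (· ::ₘ F.erase c))
      = (F.map w).sum • {F} + F.bind fun c => (p c).bind fun y => (g y).map (· ::ₘ F.erase c) := by
    rw [← Multiset.bind_nsmul_const, ← Multiset.bind_add]
    refine Multiset.bind_congr fun c hc => ?_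
    rw [← Multiset.map_bind, h c hc, Multiset.map_add, Multiset.map_nsmul, Multiset.map_singleton,
      Multiset.cons_erase hc, Multiset.map_bind]
  have hleaf : (F.bind fun c => (g c).bind fun x => (F.erase c).bind fun d =>
        if d = ℓ then {x ::ₘ (F.erase c).erase d} else 0)
      = F.bind fun c => if c = ℓ then growForest g (F.erase c) else 0 :=
    calc _ = F.bind fun c => (F.erase c).bind fun d =>
            if d = ℓ then (g c).map (· ::ₘ (F.erase c).erase d) else 0 :=
          Multiset.bind_congr fun c _ => by
            rw [Multiset.bind_bind]
            exact Multiset.bind_congr fun d _ => by split_ifs <;> simp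
      _ = F.bind fun c => (F.erase c).bind fun d =>
            if c = ℓ then (g d).map (· ::ₘ (F.erase d).erase c) else 0 :=
          Multiset.bind_bind_erase_comm _ _
      _ = _ := Multiset.bind_congr fun c _ => by
          split_ifs <;> simp [growForest, Multiset.erase_comm]
  have hdistinct : (F.bind fun c => (g c).bind fun x => (F.erase c).bind fun d =>
        (p d).map (· ::ₘ x ::ₘ (F.erase c).erase d))
      = F.bind fun c => (p c).bind fun y => (F.erase c).bind fun d =>
        (g d).map (· ::ₘ y ::ₘ (F.erase c).erase d) :=
    calc _ = F.bind fun c => (F.erase c).bind fun d => (g c).bind fun x =>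
            (p d).map (· ::ₘ x ::ₘ (F.erase c).erase d) :=
          Multiset.bind_congr fun c _ => Multiset.bind_bind _ _
      _ = F.bind fun c => (F.erase c).bind fun d => (g d).bind fun x =>
            (p c).map (· ::ₘ x ::ₘ (F.erase d).erase c) :=
          Multiset.bind_bind_erase_comm _ _
      _ = F.bind fun c => (F.erase c).bind fun d => (p c).bind fun y =>
            (g d).map (· ::ₘ y ::ₘ (F.erase c).erase d) :=
          Multiset.bind_congr fun c _ => Multiset.bind_congr fun d _ => by
            rw [Multiset.bind_map_comm, Multiset.erase_comm]
            simp only [Multiset.cons_swap]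
      _ = _ := Multiset.bind_congr fun c _ => (Multiset.bind_bind _ _).symm
  rw [growForest_bind_pruneForest_eq_add F hℓ, pruneForest_bind_growForest_eq_add, hsame, hleaf,
    hdistinct]
  abel

end Forest

namespace PreTree

theorem node_induction {P : PreTree → Prop} (h : ∀ cs, (∀ c ∈ cs, P c) → P (.node cs)) :
    ∀ t, P t
  | .node cs => h cs fun c _ => node_induction h c

theorem sizeList_eq_sum (ts : List PreTree) : sizeList ts = (ts.map size).sum := by
  induction ts with
  | nil => rfl
  | cons t ts ih => simp [sizeList, ih]

theorem size_node (cs : List PreTree) : size (.node cs) = 1 + (cs.map size).sum := by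
  rw [size, sizeList_eq_sum]

theorem size_leaf : size leaf = 1 := rfl

theorem enc_injective : Function.Injective enc := by
  intro t
  induction t using node_induction with
  | h cs ih =>
    rintro ⟨ds⟩ he
    simp only [enc] at he
    congr 1
    induction cs generalizing ds with
    | nil => cases ds <;> simp_all [encList]
    | cons c cs ihc =>
      cases ds with
      | nil => simp [encList] at he
      | cons d ds =>
        obtain ⟨hcd, hcs⟩ := Nat.pair_eq_pair.1 (Nat.succ_injective he)
        rw [ih c List.mem_cons_self hcd,
          ihc (fun c hc => ih c (List.mem_cons_of_mem _ hc)) ds hcs]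

theorem mergeSort_enc_pairwise (l : List PreTree) :
    (l.mergeSort fun a b => enc a ≤ enc b).Pairwise fun a b => enc a ≤ enc b := by
  simpa using List.pairwise_mergeSort (le := fun a b => enc a ≤ enc b)
    (fun a b c hab hbc => by simp_all; omega) (fun a b => by simp; omega) l

theorem mergeSort_enc_eq_of_perm {l l' : List PreTree} (h : l.Perm l') :
    l.mergeSort (fun a b => enc a ≤ enc b) = l'.mergeSort (fun a b => enc a ≤ enc b) := by
  have : Std.Antisymm fun a b : PreTree => enc a ≤ enc b :=
    ⟨fun a b hab hba => enc_injective (le_antisymm hab hba)⟩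
  exact List.Perm.eq_of_pairwise' (mergeSort_enc_pairwise l) (mergeSort_enc_pairwise l')
    (((l.mergeSort_perm _).trans h).trans (l'.mergeSort_perm _).symm)

noncomputable def ofForest (F : Multiset PreTree) : PreTree :=
  .node (F.toList.mergeSort fun a b => enc a ≤ enc b)

theorem exists_ofForest_eq_node (F : Multiset PreTree) :
    ∃ l : List PreTree, ofForest F = .node l ∧ (l : Multiset PreTree) = F :=
  ⟨_, rfl, by rw [Multiset.coe_eq_coe.2 (List.mergeSort_perm _ _), Multiset.coe_toList]⟩

theorem ofForest_coe (l : List PreTree) :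
    ofForest l = .node (l.mergeSort fun a b => enc a ≤ enc b) :=
  congrArg PreTree.node (mergeSort_enc_eq_of_perm (Multiset.coe_eq_coe.1 (Multiset.coe_toList _)))

theorem ofForest_zero : ofForest 0 = leaf := by
  simp [ofForest, leaf]

theorem size_ofForest (F : Multiset PreTree) : size (ofForest F) = 1 + (F.map size).sum := by
  obtain ⟨l, hl, rfl⟩ := exists_ofForest_eq_node F
  rw [hl, size_node, Multiset.map_coe, Multiset.sum_coe]

theorem canon_node (cs : List PreTree) : canon (.node cs) = ofForest (cs.map canon) := by
  have hmap : canonList cs = cs.map canon := by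
    induction cs with
    | nil => rfl
    | cons c cs ih => rw [canonList, ih, List.map_cons]
  rw [canon, hmap, ofForest_coe]

theorem canon_ofForest (F : Multiset PreTree) : canon (ofForest F) = ofForest (F.map canon) := by
  obtain ⟨l, hl, rfl⟩ := exists_ofForest_eq_node F
  rw [hl, canon_node, Multiset.map_coe]

theorem canon_canon (t : PreTree) : canon (canon t) = canon t := by
  induction t using node_induction with
  | h cs ih =>
    rw [canon_node, canon_ofForest, Multiset.map_coe, List.map_map]
    exact congrArg (ofForest ∘ (↑)) (List.map_congr_left ih)

@[elab_as_elim]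
theorem canonical_induction {P : PreTree → Prop}
    (h : ∀ F : Multiset PreTree, (∀ c ∈ F, canon c = c ∧ P c) → P (ofForest F))
    (t : PreTree) (ht : canon t = t) : P t := by
  revert ht
  induction t using node_induction with
  | h cs ih =>
    intro ht
    have hcs : ((cs.map canon : List PreTree) : Multiset PreTree) = cs := by
      obtain ⟨l, hl, hlF⟩ := exists_ofForest_eq_node ↑(cs.map canon)
      rw [canon_node, hl, node.injEq] at ht
      rw [← hlF, ht]
    have hcanon : ∀ c ∈ cs, canon c = c := fun c hc => by
      rw [← Multiset.mem_coe, ← hcs, Multiset.mem_coe, List.mem_map] at hc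
      obtain ⟨c, -, rfl⟩ := hc
      exact canon_canon c
    rw [← ht, canon_node, hcs]
    exact h _ fun c hc => ⟨hcanon c hc, ih c hc (hcanon c hc)⟩

def grow (t : PreTree) : Multiset PreTree :=
  ((positions t).map fun p => canon (addLeafAt t p) : List PreTree)

-- `P • = 0`; without the case split the removal at the root address of `•` would return `•`.
def prune (t : PreTree) : Multiset PreTree :=
  if t = leaf then 0 else ((termPositions t).map fun q => canon (removeAt t q) : List PreTree)

theorem canon_node_append_cons {pre ts : List PreTree} (h : ∀ c ∈ pre ++ ts, canon c = c)
    (x : PreTree) : canon (.node (pre ++ x :: ts)) = ofForest (canon x ::ₘ ↑(pre ++ ts)) := by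
  rw [canon_node, List.map_append, List.map_cons, List.map_congr_left (g := id),
    List.map_congr_left (l := ts) (g := id), List.map_id, List.map_id,
    Multiset.coe_eq_coe.2 List.perm_middle, ← Multiset.cons_coe]
  all_goals simp_all

theorem addLeafAtList_append (pre ts : List PreTree) (c : PreTree) (p : List ℕ) :
    addLeafAtList (pre ++ c :: ts) pre.length p = pre ++ addLeafAt c p :: ts := by
  induction pre with
  | nil => rfl
  | cons a pre ih => simp [addLeafAtList, ih]

theorem removeAtList_append (pre ts : List PreTree) (c : PreTree) (p : List ℕ) :
    removeAtList (pre ++ c :: ts) pre.length p = pre ++ removeAt c p :: ts := by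
  induction pre with
  | nil => rfl
  | cons a pre ih => simp [removeAtList, ih]

-- Stated for the children `cs` following a prefix `pre` of siblings, so that the induction can
-- walk along the list while the child indices in the addresses shift.
theorem coe_map_positionsList (pre cs : List PreTree) (h : ∀ c ∈ pre ++ cs, canon c = c) :
    (((positionsList pre.length cs).map fun q => canon (addLeafAt (.node (pre ++ cs)) q) :
        List PreTree) : Multiset PreTree)
      = (cs : Multiset PreTree).bind fun c =>
          (grow c).map fun x => ofForest (x ::ₘ (↑(pre ++ cs) : Multiset PreTree).erase c) := by
  induction cs generalizing pre with
  | nil => simp [positionsList]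
  | cons c ts ih =>
    rw [positionsList, List.map_append, ← Multiset.coe_add, ← Multiset.cons_coe,
      Multiset.cons_bind]
    congr 1
    · have hpre : ∀ d ∈ pre ++ ts, canon d = d := fun d hd =>
        h d (List.mem_append.2 ((List.mem_append.1 hd).imp id (List.mem_cons_of_mem c)))
      rw [List.map_map, grow, Multiset.map_coe, List.map_map,
        Multiset.coe_eq_coe.2 List.perm_middle, ← Multiset.cons_coe, Multiset.erase_cons_head]
      refine congrArg _ (List.map_congr_left fun p _ => ?_)
      simp only [Function.comp, addLeafAt, addLeafAtList_append, canon_node_append_cons hpre]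
    · simpa using ih (pre ++ [c]) (by simpa using h)

theorem canon_node_of_forall {cs : List PreTree} (h : ∀ c ∈ cs, canon c = c) :
    canon (.node cs) = ofForest cs := by
  rw [canon_node, List.map_congr_left (g := id) h, List.map_id]

theorem exists_cons_of_mem_termPositionsList {i : ℕ} {cs : List PreTree} {q : List ℕ}
    (h : q ∈ termPositionsList i cs) : ∃ j p, q = j :: p := by
  induction cs generalizing i with
  | nil => simp [termPositionsList] at h
  | cons c cs ih =>
    rw [termPositionsList, List.mem_append, List.mem_map] at h
    rcases h with ⟨p, -, rfl⟩ | h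
    · exact ⟨i, p, rfl⟩
    · exact ih h

theorem coe_map_termPositionsList (pre cs : List PreTree) (h : ∀ c ∈ pre ++ cs, canon c = c) :
    (((termPositionsList pre.length cs).map fun q => canon (removeAt (.node (pre ++ cs)) q) :
        List PreTree) : Multiset PreTree)
      = (cs : Multiset PreTree).bind fun c =>
          (if c = leaf then {ofForest ((↑(pre ++ cs) : Multiset PreTree).erase c)} else 0)
          + (prune c).map fun x => ofForest (x ::ₘ (↑(pre ++ cs) : Multiset PreTree).erase c) := by
  induction cs generalizing pre with
  | nil => simp [termPositionsList]
  | cons c ts ih =>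
    rw [termPositionsList, List.map_append, ← Multiset.coe_add, ← Multiset.cons_coe,
      Multiset.cons_bind]
    have hpre : ∀ d ∈ pre ++ ts, canon d = d := fun d hd =>
      h d (List.mem_append.2 ((List.mem_append.1 hd).imp id (List.mem_cons_of_mem c)))
    have herase : (↑(pre ++ c :: ts) : Multiset PreTree).erase c = ↑(pre ++ ts) := by
      rw [Multiset.coe_eq_coe.2 List.perm_middle, ← Multiset.cons_coe, Multiset.erase_cons_head]
    congr 1
    · rw [herase]
      by_cases hc : c = leaf
      · subst hc
        have hrem : removeAt (.node (pre ++ leaf :: ts)) [pre.length] = .node (pre ++ ts) := by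
          simp [removeAt, List.eraseIdx_append_of_length_le]
        rw [if_pos rfl, prune, if_pos rfl, Multiset.map_zero, add_zero, ← canon_node_of_forall hpre,
          ← hrem]
        rfl
      · obtain ⟨_ | ⟨d, ds⟩⟩ := c
        · exact absurd rfl hc
        rw [if_neg hc, prune, if_neg hc, zero_add, List.map_map,
          Multiset.map_coe, List.map_map]
        refine congrArg _ (List.map_congr_left fun q hq => ?_)
        obtain ⟨j, p, rfl⟩ := exists_cons_of_mem_termPositionsList hq
        have hrem : removeAt (.node (pre ++ .node (d :: ds) :: ts)) (pre.length :: j :: p)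
            = .node (pre ++ removeAt (.node (d :: ds)) (j :: p) :: ts) :=
          congrArg PreTree.node (removeAtList_append pre ts _ (j :: p))
        simp only [Function.comp, hrem, canon_node_append_cons hpre]
    · simpa using ih (pre ++ [c]) (by simpa using h)

theorem canon_leaf : canon leaf = leaf := by
  rw [leaf, canon_node, List.map_nil, Multiset.coe_nil, ofForest_zero, leaf]

theorem grow_ofForest {F : Multiset PreTree} (hF : ∀ c ∈ F, canon c = c) :
    grow (ofForest F) = ofForest (leaf ::ₘ F) ::ₘ (growForest grow F).map ofForest := by
  obtain ⟨l, hl, rfl⟩ := exists_ofForest_eq_node F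
  have hl' : ∀ c ∈ [] ++ l, canon c = c := by simpa using hF
  rw [hl, grow, positions, List.map_cons, ← Multiset.cons_coe]
  congr 1
  · show canon (.node (l ++ [leaf])) = _
    simpa [canon_leaf] using canon_node_append_cons (ts := []) (by simpa using hF) leaf
  · simpa [growForest, Multiset.map_bind] using coe_map_positionsList [] l hl'

theorem prune_ofForest {F : Multiset PreTree} (hF : ∀ c ∈ F, canon c = c) :
    prune (ofForest F) = (pruneForest prune leaf F).map ofForest := by
  obtain ⟨l, hl, rfl⟩ := exists_ofForest_eq_node F
  have hl' : ∀ c ∈ [] ++ l, canon c = c := by simpa using hF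
  rcases l with _ | ⟨d, ds⟩
  · simp [Multiset.coe_nil, ofForest_zero, prune, pruneForest]
  · have hne : PreTree.node (d :: ds) ≠ leaf := by simp [leaf]
    rw [hl, prune, if_neg hne]
    refine (coe_map_termPositionsList [] (d :: ds) hl').trans ?_
    simp only [List.nil_append, pruneForest, Multiset.map_bind, Multiset.map_add, Multiset.map_map]
    exact Multiset.bind_congr fun c _ => by split_ifs <;> rfl

theorem size_pos (t : PreTree) : 0 < size t := by
  cases t
  rw [size_node]
  omega

theorem prune_leaf : prune leaf = 0 := if_pos rfl

theorem canon_eq_of_mem_grow {t x : PreTree} (h : x ∈ grow t) : canon x = x := by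
  obtain ⟨p, -, rfl⟩ := List.mem_map.1 (Multiset.mem_coe.1 h)
  exact canon_canon _

theorem canon_eq_of_mem_prune {t x : PreTree} (h : x ∈ prune t) : canon x = x := by
  unfold prune at h
  split_ifs at h
  · simp at h
  · obtain ⟨q, -, rfl⟩ := List.mem_map.1 (Multiset.mem_coe.1 h)
    exact canon_canon _

theorem size_of_mem_grow {t : PreTree} (ht : canon t = t) :
    ∀ x ∈ grow t, size x = size t + 1 := by
  refine canonical_induction (fun F hF => ?_) t ht
  rw [grow_ofForest fun c hc => (hF c hc).1]
  simp only [Multiset.mem_cons, Multiset.mem_map]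
  rintro x (rfl | ⟨F', hF', rfl⟩)
  · simp [size_ofForest, size_leaf]
    ring
  · rw [size_ofForest, size_ofForest, sum_map_of_mem_growForest (fun c hc => (hF c hc).2) hF']
    ring

theorem size_of_mem_prune {t : PreTree} (ht : canon t = t) :
    ∀ x ∈ prune t, size x + 1 = size t := by
  refine canonical_induction (fun F hF => ?_) t ht
  rw [prune_ofForest fun c hc => (hF c hc).1]
  simp only [Multiset.mem_map]
  rintro x ⟨F', hF', rfl⟩
  rw [size_ofForest, size_ofForest, ← sum_map_of_mem_pruneForest size_leaf
    (fun c hc => (hF c hc).2) hF']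
  ring

theorem leaf_not_mem_grow {t : PreTree} (ht : canon t = t) : leaf ∉ grow t := fun h => by
  have := size_of_mem_grow ht leaf h
  have := size_pos t
  rw [size_leaf] at *
  omega

theorem prune_ne_zero {t : PreTree} (ht : canon t = t) : t ≠ leaf → prune t ≠ 0 := by
  refine canonical_induction (fun F hF hne => ?_) t ht
  rw [prune_ofForest fun c hc => (hF c hc).1, Ne, Multiset.map_eq_zero]
  refine pruneForest_ne_zero (fun h0 => hne (by rw [h0, ofForest_zero])) fun c hc => (hF c hc).2

theorem forall_canon_eq_of_mem_growForest {F F' : Multiset PreTree} (hF : ∀ c ∈ F, canon c = c)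
    (h : F' ∈ growForest grow F) : ∀ c ∈ F', canon c = c :=
  forall_mem_of_mem_growForest hF (fun _ _ _ => canon_eq_of_mem_grow) h

theorem forall_canon_eq_of_mem_pruneForest {F F' : Multiset PreTree} (hF : ∀ c ∈ F, canon c = c)
    (h : F' ∈ pruneForest prune leaf F) : ∀ c ∈ F', canon c = c :=
  forall_mem_of_mem_pruneForest hF (fun _ _ _ => canon_eq_of_mem_prune) h

theorem mem_grow_of_mem_prune {t : PreTree} (ht : canon t = t) : ∀ s ∈ prune t, t ∈ grow s := by
  refine canonical_induction (fun F hF => ?_) t ht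
  have hFc : ∀ c ∈ F, canon c = c := fun c hc => (hF c hc).1
  rw [prune_ofForest hFc]
  simp only [Multiset.mem_map]
  rintro s ⟨F', hF', rfl⟩
  rw [grow_ofForest (forall_canon_eq_of_mem_pruneForest hFc hF')]
  rcases eq_cons_or_mem_growForest_of_mem_pruneForest (fun c hc => (hF c hc).2) hF' with h | h
  · rw [h]
    exact Multiset.mem_cons_self _ _
  · exact Multiset.mem_cons_of_mem (Multiset.mem_map_of_mem _ h)

theorem grow_bind_prune {t : PreTree} (ht : canon t = t) :
    (grow t).bind prune = size t • {t} + (prune t).bind grow := by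
  refine canonical_induction (fun F hF => ?_) t ht
  have hFc : ∀ c ∈ F, canon c = c := fun c hc => (hF c hc).1
  have hforest := growForest_bind_pruneForest size F
    (fun c hc => leaf_not_mem_grow (hFc c hc)) fun c hc => (hF c hc).2
  have hPG : (grow (ofForest F)).bind prune = ofForest F ::ₘ
      ((pruneForest prune leaf F).map (ofForest ∘ (leaf ::ₘ ·))
        + ((growForest grow F).bind (pruneForest prune leaf)).map ofForest) := by
    have hleafF : ∀ c ∈ leaf ::ₘ F, canon c = c := by
      simpa [canon_leaf] using hFc
    rw [grow_ofForest hFc, Multiset.cons_bind, prune_ofForest hleafF,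
      pruneForest_cons_self prune leaf prune_leaf, Multiset.map_cons, Multiset.map_map,
      Multiset.cons_add, Multiset.bind_map, Multiset.map_bind]
    exact congrArg _ (congrArg _ (Multiset.bind_congr fun F' hF' =>
      prune_ofForest (forall_canon_eq_of_mem_growForest hFc hF')))
  have hGP : (prune (ofForest F)).bind grow =
      (pruneForest prune leaf F).map (ofForest ∘ (leaf ::ₘ ·))
        + ((pruneForest prune leaf F).bind (growForest grow)).map ofForest := by
    rw [prune_ofForest hFc, Multiset.bind_map, Multiset.map_bind,
      Multiset.bind_congr fun F' hF' => grow_ofForest (forall_canon_eq_of_mem_pruneForest hFc hF'),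
      Multiset.bind_cons]
    rfl
  rw [hPG, hGP, hforest, size_ofForest, Multiset.map_add, Multiset.map_nsmul,
    Multiset.map_singleton, add_nsmul, one_nsmul, ← Multiset.singleton_add]
  abel

theorem eq_leaf_of_size_eq_one {t : PreTree} (h : size t = 1) : t = leaf := by
  obtain ⟨_ | ⟨c, cs⟩⟩ := t
  · rfl
  · have := size_pos c
    simp only [size_node, List.map_cons, List.sum_cons] at h
    omega

theorem mem_treeList_of_mem_grow {n : ℕ} {t s : PreTree} (ht : t ∈ treeList (n + 1))
    (hs : s ∈ grow t) : s ∈ treeList (n + 2) := by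
  rw [treeList, List.mem_dedup, List.mem_flatMap]
  exact ⟨t, ht, Multiset.mem_coe.1 hs⟩

theorem canon_eq_and_size_of_mem_treeList :
    ∀ {n : ℕ} {t : PreTree}, t ∈ treeList n → canon t = t ∧ size t = n
  | 0, _, h => by simp [treeList] at h
  | 1, _, h => by
    rw [List.mem_singleton.1 h]
    exact ⟨canon_leaf, size_leaf⟩
  | n + 2, s, h => by
    rw [treeList, List.mem_dedup, List.mem_flatMap] at h
    obtain ⟨t, ht, hs⟩ := h
    obtain ⟨htc, hts⟩ := canon_eq_and_size_of_mem_treeList ht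
    refine ⟨canon_eq_of_mem_grow (t := t) hs, ?_⟩
    rw [size_of_mem_grow htc s hs, hts]

theorem mem_treeList_of_canon_eq {t : PreTree} (ht : canon t = t) : t ∈ treeList (size t) := by
  obtain ⟨n, hn⟩ : ∃ n, size t = n + 1 := ⟨size t - 1, by have := size_pos t; omega⟩
  rw [hn]
  induction n generalizing t with
  | zero =>
    rw [eq_leaf_of_size_eq_one hn]
    exact List.mem_singleton_self leaf
  | succ n ih =>
    have hne : t ≠ leaf := fun h => by rw [h, size_leaf] at hn; omega
    obtain ⟨s, hs⟩ := Multiset.exists_mem_of_ne_zero (prune_ne_zero ht hne)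
    have hsize := size_of_mem_prune ht s hs
    exact mem_treeList_of_mem_grow (ih (canon_eq_of_mem_prune hs) (by omega))
      (mem_grow_of_mem_prune ht s hs)

theorem mem_trees {n : ℕ} {t : PreTree} : t ∈ trees n ↔ canon t = t ∧ size t = n := by
  rw [trees, List.mem_toFinset]
  exact ⟨canon_eq_and_size_of_mem_treeList, fun ⟨hc, hs⟩ => hs ▸ mem_treeList_of_canon_eq hc⟩

theorem ncoef_eq_count (s t : PreTree) : ncoef s t = (grow s).count t := by
  rw [ncoef, grow, Multiset.coe_count, List.count_eq_length_filter, List.filter_map,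
    List.length_map]
  rfl

theorem mcoef_eq_count {t : PreTree} (ht : t ≠ leaf) (s : PreTree) :
    mcoef s t = (prune t).count s := by
  rw [mcoef, prune, if_neg ht, Multiset.coe_count, List.count_eq_length_filter, List.filter_map,
    List.length_map]
  rfl

theorem ne_leaf_of_one_lt_size {t : PreTree} (h : 1 < size t) : t ≠ leaf := by
  rintro rfl
  exact h.ne' size_leaf

theorem sum_ncoef_mul_mcoef {t : PreTree} (ht : canon t = t) (t' : PreTree) :
    ∑ s ∈ trees (size t + 1), ncoef t s * mcoef t' s = ((grow t).bind prune).count t' := by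
  rw [← Multiset.sum_count_mul_count_eq_count_bind fun s hs =>
    mem_trees.2 ⟨canon_eq_of_mem_grow hs, size_of_mem_grow ht s hs⟩]
  refine Finset.sum_congr rfl fun s hs => ?_
  have : 1 < size s := by rw [(mem_trees.1 hs).2]; exact Nat.lt_add_of_pos_left (size_pos t)
  rw [ncoef_eq_count, mcoef_eq_count (ne_leaf_of_one_lt_size this)]

theorem sum_mcoef_mul_ncoef {t : PreTree} (ht : canon t = t) (t' : PreTree) :
    ∑ s ∈ trees (size t - 1), mcoef s t * ncoef s t' = ((prune t).bind grow).count t' := by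
  rw [← Multiset.sum_count_mul_count_eq_count_bind (S := trees (size t - 1)) fun s hs =>
    mem_trees.2 ⟨canon_eq_of_mem_prune hs, by have := size_of_mem_prune ht s hs; omega⟩]
  refine Finset.sum_congr rfl fun s hs => ?_
  have : 1 < size t := by have := (mem_trees.1 hs).2; have := size_pos s; omega
  rw [ncoef_eq_count, mcoef_eq_count (ne_leaf_of_one_lt_size this)]

end PreTree

open PreTree in
/-- The commutation relation `P G - G P = n·I` on `ℂ𝒯_n` for
every `n ≥ 1`: for all `t, t' ∈ 𝒯_n`, the coefficient of `t'` in
`P(G(t)) - G(P(t))` is `n` if `t' = t` and `0` otherwise. -/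
theorem pruning_growth_commutation (n : ℕ) (hn : 1 ≤ n) (t t' : PreTree)
    (ht : t ∈ trees n) (ht' : t' ∈ trees n) :
    ((∑ s ∈ trees (n + 1), ncoef t s * mcoef t' s : ℕ) : ℤ)
        - ((∑ s ∈ trees (n - 1), mcoef s t * ncoef s t' : ℕ) : ℤ)
      = if t' = t then (n : ℤ) else 0 := by
  obtain ⟨htc, rfl⟩ := mem_trees.1 ht
  rw [sum_ncoef_mul_mcoef htc, sum_mcoef_mul_ncoef htc, grow_bind_prune htc, Multiset.count_add,
    Multiset.count_nsmul, Multiset.count_singleton]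
  split_ifs <;> push_cast <;> ring

end RootedTreeChain
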